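/- Let w ∈ W_K and let s ∈ S₂(K) be such that s(V_i) = w(V_i) for i = 1,2,3,4 and such that s and w have equal integrals over each of the four edges of K, i.e. ∫₀ᵃ s(x,0) dx = ∫₀ᵃ w(x,0) dx, ∫₀ᵃ s(x,b) dx = ∫₀ᵃ w(x,b) dx, ∫₀ᵇ s(a,y) dy = ∫₀ᵇ w(a,y) dy, and ∫₀ᵇ s(0,y) dy = ∫₀ᵇ w(0,y) dy. Then the restrictions of w − s to the two vertical edges coincide: (w − s)(a, y) = (w − s)(0, y) for every y ∈ [0,b]. -/

import Mathlib

open MvPolynomial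

/-! Along the vertical edges, `x⁴` contributes the constant `a⁴`, `y⁴` cancels in the difference
`(w - s)(a, y) - (w - s)(0, y)`, and every other monomial of `W_K` or `S₂(K)` has degree at most 2
in `y`. So this difference is a quadratic in `y`; it vanishes at `y = 0` and `y = b` (vertex
interpolation) and has zero mean on `[0, b]` (vertical edge integrals), hence it is identically
zero. -/

/-- Membership in the shape function space `W_K = P₃ ⊕ span{x⁴, y⁴}`. -/
def memWK (w : MvPolynomial (Fin 2) ℝ) : Prop :=
  ∃ (p : MvPolynomial (Fin 2) ℝ) (c d : ℝ),
    p.totalDegree ≤ 3 ∧ w = p + C c * X 0 ^ 4 + C d * X 1 ^ 4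

/-- Membership in the second-order serendipity space
`S₂(K) = P₂ ⊕ span{x²y, xy²}`. -/
def memS2 (s : MvPolynomial (Fin 2) ℝ) : Prop :=
  ∃ (p : MvPolynomial (Fin 2) ℝ) (c d : ℝ),
    p.totalDegree ≤ 2 ∧ s = p + C c * X 0 ^ 2 * X 1 + C d * X 0 * X 1 ^ 2

/-- Exponents `(i, k)` of monomials `xⁱ yᵏ` whose contribution to `q(a, y) - q(0, y)` is
quadratic in `y`. -/
def edgeDiffQuadraticSupport : Set (Fin 2 →₀ ℕ) := {m | m 0 = 0 ∨ m 1 ≤ 2}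

section

variable {R : Type*} [CommSemiring R]

lemma restrictTotalDegree_three_le_restrictSupport :
    restrictTotalDegree (Fin 2) R 3 ≤ restrictSupport R edgeDiffQuadraticSupport := by
  refine restrictSupport_mono R fun m (hm : (m.sum fun _ e => e) ≤ 3) => ?_
  rw [Finsupp.sum_fintype _ _ (fun _ => rfl), Fin.sum_univ_two] at hm
  change m 0 = 0 ∨ m 1 ≤ 2
  omega

lemma X_pow_mem_restrictSupport (i : Fin 2) (n : ℕ) :
    (X i ^ n : MvPolynomial (Fin 2) R) ∈ restrictSupport R edgeDiffQuadraticSupport := by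
  rw [X_pow_eq_monomial, monomial_mem_restrictSupport]
  left
  fin_cases i <;> simp [edgeDiffQuadraticSupport]

lemma mem_restrictSupport_of_memWK {w : MvPolynomial (Fin 2) ℝ} (hw : memWK w) :
    w ∈ restrictSupport ℝ edgeDiffQuadraticSupport := by
  obtain ⟨p, c, d, hp, rfl⟩ := hw
  have hp' : p ∈ restrictTotalDegree (Fin 2) ℝ 3 := (mem_restrictTotalDegree _ _ _).mpr hp
  refine add_mem (add_mem (restrictTotalDegree_three_le_restrictSupport hp') ?_) ?_ <;>
    rw [← smul_eq_C_mul] <;> exact Submodule.smul_mem _ _ (X_pow_mem_restrictSupport _ _)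

lemma mem_restrictSupport_of_memS2 {s : MvPolynomial (Fin 2) ℝ} (hs : memS2 s) :
    s ∈ restrictSupport ℝ edgeDiffQuadraticSupport := by
  obtain ⟨p, c, d, hp, rfl⟩ := hs
  apply restrictTotalDegree_three_le_restrictSupport
  rw [mem_restrictTotalDegree]
  refine (totalDegree_add _ _).trans
    (max_le ((totalDegree_add _ _).trans (max_le (by omega) ?_)) ?_) <;>
    grw [totalDegree_mul, totalDegree_mul, totalDegree_C, totalDegree_X_pow, totalDegree_X]

end

lemma exists_quadratic_eval_sub_eval {q : MvPolynomial (Fin 2) ℝ}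
    (hq : q ∈ restrictSupport ℝ edgeDiffQuadraticSupport) (a : ℝ) :
    ∃ c₀ c₁ c₂ : ℝ, ∀ y, eval ![a, y] q - eval ![0, y] q = c₀ + c₁ * y + c₂ * y ^ 2 := by
  rw [restrictSupport_eq_span] at hq
  induction hq using Submodule.span_induction with
  | mem _ hm =>
    obtain ⟨m, hm, rfl⟩ := hm
    have heval : ∀ y, eval ![a, y] (monomial m 1) - eval ![0, y] (monomial m 1) =
        (a ^ m 0 - 0 ^ m 0) * y ^ m 1 := by
      intro y
      simp only [eval_monomial, Finsupp.prod_fintype _ _ (fun _ => pow_zero _), Fin.prod_univ_two,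
        Matrix.cons_val_zero, Matrix.cons_val_one, Matrix.cons_val_fin_one, one_mul]
      ring
    rcases hm with h0 | h1
    · exact ⟨0, 0, 0, fun y => by simp [heval, h0]⟩
    · interval_cases m 1
      · exact ⟨a ^ m 0 - 0 ^ m 0, 0, 0, fun y => by simp [heval]⟩
      · exact ⟨0, a ^ m 0 - 0 ^ m 0, 0, fun y => by simp [heval]⟩
      · exact ⟨0, 0, a ^ m 0 - 0 ^ m 0, fun y => by simp [heval]⟩
  | zero => exact ⟨0, 0, 0, fun y => by simp⟩
  | add p q _ _ hp hq =>
    obtain ⟨c₀, c₁, c₂, hp⟩ := hp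
    obtain ⟨d₀, d₁, d₂, hq⟩ := hq
    refine ⟨c₀ + d₀, c₁ + d₁, c₂ + d₂, fun y => ?_⟩
    simp only [map_add]
    linear_combination hp y + hq y
  | smul r p _ hp =>
    obtain ⟨c₀, c₁, c₂, hp⟩ := hp
    refine ⟨r * c₀, r * c₁, r * c₂, fun y => ?_⟩
    simp only [smul_eval]
    linear_combination r * hp y

lemma integral_quadratic (b c₀ c₁ c₂ : ℝ) :
    ∫ y in (0:ℝ)..b, c₀ + c₁ * y + c₂ * y ^ 2 = c₀ * b + c₁ * (b ^ 2 / 2) + c₂ * (b ^ 3 / 3) := by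
  rw [intervalIntegral.integral_add, intervalIntegral.integral_add,
    intervalIntegral.integral_const_mul, intervalIntegral.integral_const_mul, integral_id,
    integral_pow, intervalIntegral.integral_const] <;>
    try exact Continuous.intervalIntegrable (by fun_prop) _ _
  simp
  ring

lemma eq_zero_of_quadratic_of_integral_eq_zero {g : ℝ → ℝ} {b : ℝ} (hb : b ≠ 0)
    (hg : ∃ c₀ c₁ c₂ : ℝ, ∀ y, g y = c₀ + c₁ * y + c₂ * y ^ 2)
    (hg0 : g 0 = 0) (hgb : g b = 0) (hI : ∫ y in (0:ℝ)..b, g y = 0) : g = 0 := by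
  obtain ⟨c₀, c₁, c₂, hg⟩ := hg
  rw [show g = fun y => c₀ + c₁ * y + c₂ * y ^ 2 from funext hg] at hg0 hgb hI ⊢
  rw [integral_quadratic] at hI
  have hc₀ : c₀ = 0 := by simpa using hg0
  have hgb' : c₁ * b + c₂ * b ^ 2 = 0 := by simpa [hc₀] using hgb
  have hI' : c₁ * (b ^ 2 / 2) + c₂ * (b ^ 3 / 3) = 0 := by simpa [hc₀] using hI
  have hc₂ : c₂ = 0 := by
    have : c₂ * b ^ 3 = 0 := by linear_combination 3 * b * hgb' - 6 * hI'
    simpa [hb] using this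
  have hc₁ : c₁ = 0 := by
    have : c₁ * b = 0 := by linear_combination hgb' - b ^ 2 * hc₂
    simpa [hb] using this
  ext y
  simp [hc₀, hc₁, hc₂]

theorem stmt10 (a b : ℝ) (hb : 0 < b)
    (w s : MvPolynomial (Fin 2) ℝ) (hw : memWK w) (hs : memS2 s)
    (hV1 : eval ![(0:ℝ), 0] s = eval ![(0:ℝ), 0] w)
    (hV2 : eval ![a, 0] s = eval ![a, 0] w)
    (hV3 : eval ![a, b] s = eval ![a, b] w)
    (hV4 : eval ![(0:ℝ), b] s = eval ![(0:ℝ), b] w)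
    (hE2 : (∫ y in (0:ℝ)..b, eval ![a, y] s) = ∫ y in (0:ℝ)..b, eval ![a, y] w)
    (hE4 : (∫ y in (0:ℝ)..b, eval ![(0:ℝ), y] s) =
      ∫ y in (0:ℝ)..b, eval ![(0:ℝ), y] w) :
    ∀ y ∈ Set.Icc (0:ℝ) b, eval ![a, y] (w - s) = eval ![(0:ℝ), y] (w - s) := by
  set g : ℝ → ℝ := fun y => eval ![a, y] (w - s) - eval ![0, y] (w - s) with hg_def
  have hquad : ∃ c₀ c₁ c₂ : ℝ, ∀ y, g y = c₀ + c₁ * y + c₂ * y ^ 2 :=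
    exists_quadratic_eval_sub_eval
      (sub_mem (mem_restrictSupport_of_memWK hw) (mem_restrictSupport_of_memS2 hs)) a
  have hg0 : g 0 = 0 := by simp [hg_def, hV1, hV2]
  have hgb : g b = 0 := by simp [hg_def, hV3, hV4]
  have hint : ∀ (x₀ : ℝ) (q : MvPolynomial (Fin 2) ℝ),
      IntervalIntegrable (fun y => eval ![x₀, y] q) MeasureTheory.volume 0 b :=
    fun x₀ q => ((continuous_eval q).comp (by fun_prop)).intervalIntegrable _ _
  have hI : ∫ y in (0:ℝ)..b, g y = 0 := by
    simp only [hg_def, map_sub]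
    rw [intervalIntegral.integral_sub ((hint a w).sub (hint a s)) ((hint 0 w).sub (hint 0 s)),
      intervalIntegral.integral_sub (hint a w) (hint a s),
      intervalIntegral.integral_sub (hint 0 w) (hint 0 s), hE2, hE4]
    ring
  intro y _
  have hg : g = 0 := eq_zero_of_quadratic_of_integral_eq_zero hb.ne' hquad hg0 hgb hI
  exact sub_eq_zero.mp (congr_fun hg y)
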